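/- An L-bilipschitz homeomorphism f of the open unit ball Bⁿ (with the Euclidean metric) which is at bounded uniform Euclidean distance δ < 1 from the identity and maps Bⁿ onto Bⁿ extends to a map g of the sphere Sⁿ = ℝⁿ ∪ {∞} defined by g = f on Bⁿ and g = id outside, and g is continuous (a homeomorphism of Sⁿ) provided f extends continuously by the identity to ∂Bⁿ; in particular, if f is the identity on ∂Bⁿ then g is an L'-bilipschitz homeomorphism of Sⁿ for some L' depending only on L (and the metrics chosen). -/
import Mathlib

open Metric OnePoint Filter

theorem stmt_13 (n : ℕ) (L : ℝ) (hL : 1 ≤ L) :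
    ∃ L' : ℝ, 1 ≤ L' ∧
      ∀ (f : EuclideanSpace ℝ (Fin n) → EuclideanSpace ℝ (Fin n)) (δ : ℝ), δ < 1 →
        (∀ x ∈ closedBall (0 : EuclideanSpace ℝ (Fin n)) 1,
          ∀ y ∈ closedBall (0 : EuclideanSpace ℝ (Fin n)) 1,
            dist x y / L ≤ dist (f x) (f y) ∧ dist (f x) (f y) ≤ L * dist x y) →
        f '' closedBall (0 : EuclideanSpace ℝ (Fin n)) 1 =
          closedBall (0 : EuclideanSpace ℝ (Fin n)) 1 →
        (∀ x ∈ sphere (0 : EuclideanSpace ℝ (Fin n)) 1, f x = x) →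
        (∀ x ∈ closedBall (0 : EuclideanSpace ℝ (Fin n)) 1, dist (f x) x ≤ δ) →
        ∀ g : EuclideanSpace ℝ (Fin n) → EuclideanSpace ℝ (Fin n),
          (∀ x, ‖x‖ ≤ 1 → g x = f x) → (∀ x, 1 < ‖x‖ → g x = x) →
          ∀ gS : OnePoint (EuclideanSpace ℝ (Fin n)) → OnePoint (EuclideanSpace ℝ (Fin n)),
            (∀ x : EuclideanSpace ℝ (Fin n), gS (↑x) = ↑(g x)) → gS ∞ = ∞ →
            (IsHomeomorph gS ∧
              ∀ x y : EuclideanSpace ℝ (Fin n),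
                dist x y / L' ≤ dist (g x) (g y) ∧ dist (g x) (g y) ≤ L' * dist x y) := by
  set E := EuclideanSpace ℝ (Fin n)
  have hL0 : (0:ℝ) < L := lt_of_lt_of_le one_pos hL
  refine ⟨2 * L + 1, by linarith, ?_⟩
  intro f δ hδ hbl himg hid hnear g hg1 hg2 gS hgc hginf
  have hL'0 : (0:ℝ) < 2 * L + 1 := by linarith
  -- f maps closed ball into closed ball
  have hfmem : ∀ x : E, ‖x‖ ≤ 1 → ‖f x‖ ≤ 1 := by
    intro x hx
    have : f x ∈ closedBall (0:E) 1 := by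
      rw [← himg]; exact Set.mem_image_of_mem f (mem_closedBall_zero_iff.2 hx)
    exact mem_closedBall_zero_iff.1 this
  -- the bilipschitz property of g
  have key : ∀ x y : E, dist x y / (2*L+1) ≤ dist (g x) (g y) ∧
      dist (g x) (g y) ≤ (2*L+1) * dist x y := by
    -- first the mixed case as an auxiliary claim
    have mixed : ∀ x y : E, ‖x‖ ≤ 1 → 1 < ‖y‖ →
        dist x y / (2*L+1) ≤ dist (f x) y ∧ dist (f x) y ≤ (2*L+1) * dist x y := by
      intro x y hx hy
      set p : E := ‖y‖⁻¹ • y with hp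
      have hy0 : (0:ℝ) < ‖y‖ := lt_trans one_pos hy
      have hpn : ‖p‖ = 1 := by
        rw [hp, norm_smul, norm_inv, norm_norm, inv_mul_cancel₀ (ne_of_gt hy0)]
      have hfp : f p = p := hid p (by simpa [mem_sphere_zero_iff_norm] using hpn)
      have hdyp : dist y p = ‖y‖ - 1 := by
        rw [hp, dist_eq_norm]
        have : y - ‖y‖⁻¹ • y = (1 - ‖y‖⁻¹) • y := by
          rw [sub_smul, one_smul]
        rw [this, norm_smul, Real.norm_eq_abs, abs_of_nonneg, sub_mul, one_mul,
          inv_mul_cancel₀ (ne_of_gt hy0)]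
        have : ‖y‖⁻¹ ≤ 1 := by
          rw [inv_le_one_iff₀]; right; exact le_of_lt hy
        linarith
      have hxB : x ∈ closedBall (0:E) 1 := mem_closedBall_zero_iff.2 hx
      have hpB : p ∈ closedBall (0:E) 1 := mem_closedBall_zero_iff.2 hpn.le
      have hbl' := hbl x hxB p hpB
      rw [hfp] at hbl'
      have he : ‖y‖ - 1 ≤ dist x y := by
        have h1 : ‖y‖ - ‖x‖ ≤ ‖x - y‖ := by
          have := norm_sub_norm_le y x
          rw [norm_sub_rev] at this; linarith
        rw [dist_eq_norm]; linarith
      have hxp_le : dist x p ≤ dist x y + (‖y‖ - 1) := by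
        have := dist_triangle x y p; rw [hdyp] at this; linarith
      have hxp_ge : dist x y - (‖y‖ - 1) ≤ dist x p := by
        have := dist_triangle x p y
        have h2 : dist p y = ‖y‖ - 1 := by rw [dist_comm]; exact hdyp
        linarith [this, h2 ▸ this]
      constructor
      · -- lower bound
        have hfx1 : ‖f x‖ ≤ 1 := hfmem x hx
        have hD1 : ‖y‖ - 1 ≤ dist (f x) y := by
          have h1 : ‖y‖ - ‖f x‖ ≤ ‖f x - y‖ := by
            have := norm_sub_norm_le y (f x)
            rw [norm_sub_rev] at this; linarith
          rw [dist_eq_norm]; linarith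
        have hD2 : dist x p / L - (‖y‖ - 1) ≤ dist (f x) y := by
          have ht : dist (f x) p ≤ dist (f x) y + dist y p := dist_triangle _ _ _
          rw [hdyp] at ht
          linarith [hbl'.1]
        have hstep : dist x p ≤ L * (dist (f x) y + (‖y‖ - 1)) := by
          have := hD2
          have h3 : dist x p / L ≤ dist (f x) y + (‖y‖ - 1) := by linarith
          calc dist x p = L * (dist x p / L) := by field_simp
            _ ≤ L * (dist (f x) y + (‖y‖ - 1)) :=
              mul_le_mul_of_nonneg_left h3 hL0.le
        have : dist x y ≤ (2*L+1) * dist (f x) y := by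
          have h4 : dist x y ≤ dist x p + (‖y‖ - 1) := by linarith
          calc dist x y ≤ L * (dist (f x) y + (‖y‖ - 1)) + (‖y‖ - 1) := by linarith
            _ ≤ L * (dist (f x) y + dist (f x) y) + dist (f x) y := by nlinarith
            _ = (2*L+1) * dist (f x) y := by ring
        rw [div_le_iff₀ hL'0]; linarith
      · -- upper bound
        have ht : dist (f x) y ≤ dist (f x) p + dist p y := dist_triangle _ _ _
        have h2 : dist p y = ‖y‖ - 1 := by rw [dist_comm]; exact hdyp
        have h3 : dist (f x) p ≤ L * dist x p := hbl'.2
        have h4 : L * dist x p ≤ L * (dist x y + (‖y‖ - 1)) :=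
          mul_le_mul_of_nonneg_left hxp_le hL0.le
        nlinarith
    intro x y
    by_cases hx : ‖x‖ ≤ 1 <;> by_cases hy : ‖y‖ ≤ 1
    · rw [hg1 x hx, hg1 y hy]
      obtain ⟨hlo, hhi⟩ := hbl x (mem_closedBall_zero_iff.2 hx) y (mem_closedBall_zero_iff.2 hy)
      constructor
      · refine le_trans ?_ hlo
        apply div_le_div_of_nonneg_left dist_nonneg hL0; linarith
      · refine le_trans hhi ?_
        nlinarith [dist_nonneg (x := x) (y := y)]
    · rw [hg1 x hx, hg2 y (not_le.1 hy)]
      exact mixed x y hx (not_le.1 hy)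
    · rw [hg2 x (not_le.1 hx), hg1 y hy]
      rw [dist_comm x y, dist_comm x (f y)]
      exact mixed y x hy (not_le.1 hx)
    · rw [hg2 x (not_le.1 hx), hg2 y (not_le.1 hy)]
      constructor
      · rw [div_le_iff₀ hL'0]; nlinarith [dist_nonneg (x := x) (y := y)]
      · nlinarith [dist_nonneg (x := x) (y := y)]
  refine ⟨?_, key⟩
  -- g is injective
  have hginj : Function.Injective g := by
    intro x y hxy
    have := (key x y).1
    rw [hxy, dist_self] at this
    have : dist x y ≤ 0 := by
      rw [div_le_iff₀ hL'0] at this; linarith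
    exact dist_le_zero.1 this
  -- g is surjective
  have hgsurj : Function.Surjective g := by
    intro y
    by_cases hy : ‖y‖ ≤ 1
    · have : y ∈ f '' closedBall (0:E) 1 := by rw [himg]; exact mem_closedBall_zero_iff.2 hy
      obtain ⟨x, hxB, hfx⟩ := this
      exact ⟨x, by rw [hg1 x (mem_closedBall_zero_iff.1 hxB)]; exact hfx⟩
    · exact ⟨y, hg2 y (not_le.1 hy)⟩
  -- g is continuous (Lipschitz)
  have hgcont : Continuous g := by
    refine LipschitzWith.continuous (K := Real.toNNReal (2*L+1)) ?_
    refine LipschitzWith.of_dist_le_mul fun x y => ?_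
    rw [Real.coe_toNNReal _ hL'0.le]
    exact (key x y).2
  -- gS equals OnePoint.map g
  have hgSmap : gS = OnePoint.map g := by
    funext z
    induction z using OnePoint.rec with
    | infty => rw [hginf, OnePoint.map_infty]
    | coe x => rw [hgc, OnePoint.map_some]
  rw [hgSmap]
  haveI : T4Space (OnePoint E) := {}
  rw [isHomeomorph_iff_continuous_bijective]
  refine ⟨?_, ?_, ?_⟩
  · apply OnePoint.continuous_map hgcont
    rw [Filter.coclosedCompact_eq_cocompact, ← Metric.cobounded_eq_cocompact]
    have hev : g =ᶠ[Bornology.cobounded E] id := by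
      filter_upwards [eventually_cobounded_le_norm (2:ℝ)] with x hx
      exact hg2 x (by linarith)
    exact Filter.Tendsto.congr' hev.symm tendsto_id
  · exact Option.map_injective hginj
  · show Function.Surjective (Option.map g)
    intro b
    cases b with
    | none => exact ⟨none, rfl⟩
    | some y =>
      obtain ⟨x, hx⟩ := hgsurj y
      exact ⟨Option.some x, by simp [OnePoint.map, hx]⟩
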